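/- There is an absolute constant C such that the following holds. Let Q, L ≥ 1 and R > 0, and let S be a subset of Z[i]\{0}. Then for every q₂ = u₂+v₂·i ∈ S with Q/2 < N(q₂) ≤ Q and every r₂ = x₂+y₂·i with (r₂,q₂) = 1 (setting k = x₂u₂+y₂v₂ and l = x₂v₂−y₂u₂), one has #{q = u+v·i ∈ S : N(q) ≤ L·Q and (f((u·k+v·l)/N(q₂)), f((−v·k+u·l)/N(q₂))) ∈ D_R(0)} ≤ C·(1 + R²·Q)·L. -/

import Mathlib

noncomputable section

/-- `e(t) = exp(2πit)`. -/
def e2pi (t : ℝ) : ℂ := Complex.exp (2 * Real.pi * Complex.I * t)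

/-- `T` is a reduced residue system modulo `q` in `ℤ[i]`: the reduction map is injective
on `T` and its image is exactly the set of units of `ℤ[i]/(q)`. -/
def IsRRS (q : GaussianInt) (T : Finset GaussianInt) : Prop :=
  Set.InjOn (fun r => Ideal.Quotient.mk (Ideal.span {q}) r) ↑T ∧
  (fun r => Ideal.Quotient.mk (Ideal.span {q}) r) '' ↑T = {x | IsUnit x}

/-- The inner exponential sum `∑_{n ∈ ℤ[i], N(n) ≤ N} a_n e(Tr(n r /(2q)))`,
where `Tr(x) = 2 Re x`. -/
def sieveTerm (a : GaussianInt → ℂ) (N : ℝ) (q r : GaussianInt) : ℂ :=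
  ∑ᶠ n ∈ {n : GaussianInt | (Zsqrtd.norm n : ℝ) ≤ N},
    a n * e2pi (2 * (GaussianInt.toComplex (n * r) / (2 * GaussianInt.toComplex q)).re)

/-- `Z = ∑_{N(n) ≤ N} |a_n|²`. -/
def Zsum (a : GaussianInt → ℂ) (N : ℝ) : ℝ :=
  ∑ᶠ n ∈ {n : GaussianInt | (Zsqrtd.norm n : ℝ) ≤ N}, ‖a n‖ ^ 2

/-- `Σ(Q,N;S)`, the large sieve sum over moduli `q ∈ S` with `Q/2 < N(q) ≤ Q`,
where for each modulus `q` the set `T q` is a reduced residue system modulo `q`. -/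
def Sig (Q N : ℝ) (S : Set GaussianInt) (T : GaussianInt → Finset GaussianInt)
    (a : GaussianInt → ℂ) : ℝ :=
  ∑ᶠ q ∈ {q : GaussianInt | q ∈ S ∧ Q / 2 < (Zsqrtd.norm q : ℝ) ∧ (Zsqrtd.norm q : ℝ) ≤ Q},
    ∑ r ∈ T q, ‖sieveTerm a N q r‖ ^ 2

/-- Two Gaussian integers are coprime if their only common divisors are units. -/
def GCoprime (r q : GaussianInt) : Prop :=
  ∀ d : GaussianInt, d ∣ r → d ∣ q → IsUnit d

/-- `f(z) = {z + 1/2} - 1/2`. -/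
def ffrac (z : ℝ) : ℝ := Int.fract (z + 1 / 2) - 1 / 2

/-! The statement's point is the conjugate of `q r₂ / q₂` reduced to the unit square around
the origin. Gaussian division rounds coordinatewise, so the norm of the remainder
`q r₂ % q₂` equals `N(q₂)` times the squared length of that point, and the disk condition says
`N(q r₂ % q₂) ≤ R² Q`: there are `O(1 + R² Q)` possible remainders. Since `r₂` is invertible
modulo `q₂`, moduli with the same remainder are congruent modulo `q₂`, and as `N(q₂) > Q / 2`
a residue class modulo `q₂` contains `O(L)` Gaussian integers of norm at most `L Q`. -/

open Set

lemma ffrac_eq_sub_round (z : ℝ) : ffrac z = z - round z := by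
  rw [ffrac, Int.fract, round_eq]; ring

lemma sq_ffrac_neg (z : ℝ) : ffrac (-z) ^ 2 = ffrac z ^ 2 := by
  rw [← sq_abs, ← sq_abs (ffrac z), ffrac_eq_sub_round, ffrac_eq_sub_round,
    abs_sub_round_eq_min, abs_sub_round_eq_min]
  by_cases h : Int.fract z = 0
  · rw [h, Int.fract_neg_eq_zero.mpr h]
  · rw [Int.fract_neg h, sub_sub_cancel, min_comm]

lemma sq_two_mul_sqrt_add_one_le {X : ℝ} (hX : 0 ≤ X) : (2 * √X + 1) ^ 2 ≤ 8 * X + 2 := by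
  nlinarith [Real.sq_sqrt hX, sq_nonneg (2 * √X - 1)]

theorem Set.ncard_le_mul_ncard_of_mapsTo {α β : Type*} {f : α → β} {s : Set α} {t : Set β}
    (hf : MapsTo f s t) (ht : t.Finite) (n : ℕ) (hn : ∀ b ∈ t, (s ∩ f ⁻¹' {b}).ncard ≤ n) :
    s.ncard ≤ n * t.ncard := by
  classical
  rcases s.finite_or_infinite with hs | hs
  · rw [ncard_eq_toFinset_card s hs, ncard_eq_toFinset_card t ht]
    refine Finset.card_le_mul_card_image_of_maps_to
      (fun a ha => by simpa using hf (by simpa using ha)) n fun b hb => ?_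
    convert hn b (by simpa using hb)
    rw [ncard_eq_toFinset_card _ (hs.inter_of_left _)]
    congr; ext; simp
  · simp [hs.ncard]

theorem EuclideanDomain.dvd_sub_of_mul_mod_eq {R : Type*} [EuclideanDomain R] {a b r d : R}
    (hr : IsCoprime r d) (h : a * r % d = b * r % d) : d ∣ a - b := by
  rw [mod_eq_sub_mul_div, mod_eq_sub_mul_div] at h
  exact hr.symm.dvd_of_dvd_mul_right ⟨a * r / d - b * r / d, by linear_combination h⟩

theorem GCoprime.isCoprime {r q : GaussianInt} (h : GCoprime r q) : IsCoprime r q := by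
  rw [← EuclideanDomain.gcd_isUnit_iff]
  exact h _ (EuclideanDomain.gcd_dvd_left _ _) (EuclideanDomain.gcd_dvd_right _ _)

namespace GaussianInt

theorem norm_mod_eq (x : GaussianInt) {y : GaussianInt} (hy : y ≠ 0) :
    ((x % y).norm : ℝ) = y.norm *
      (ffrac ((x * star y).re / y.norm) ^ 2 + ffrac ((x * star y).im / y.norm) ^ 2) := by
  have hn : y.norm ≠ 0 := norm_eq_zero.not.mpr hy
  have hround (a : ℤ) : round ((a / y.norm : ℚ)) = round ((a : ℝ) / y.norm) := by
    rw [← Rat.round_cast (α := ℝ)]; push_cast; rfl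
  -- `x / y` rounds the coordinates of `x * star y / N y`, and `y * star y = N y`.
  have hmul : star y * (x % y) =
      ⟨(x * star y).re - y.norm * round (((x * star y).re : ℝ) / y.norm),
        (x * star y).im - y.norm * round (((x * star y).im : ℝ) / y.norm)⟩ := by
    rw [EuclideanDomain.mod_eq_sub_mul_div, mul_sub, ← mul_assoc, mul_comm (star y) y,
      ← Zsqrtd.norm_eq_mul_conj, div_def, hround, hround, mul_comm (star y)]
    ext <;> simp
  have hnorm : (y.norm : ℝ) * (x % y).norm = (star y * (x % y)).norm := by
    rw [Zsqrtd.norm_mul, Zsqrtd.norm_conj, Int.cast_mul]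
  apply mul_left_cancel₀ (show (y.norm : ℝ) ≠ 0 by exact_mod_cast hn)
  rw [hnorm, hmul, Zsqrtd.norm_def, ffrac_eq_sub_round, ffrac_eq_sub_round]
  push_cast
  field_simp
  ring

theorem norm_mod_le_of_sqrt_le (x : GaussianInt) {y : GaussianInt} (hy : y ≠ 0) {R : ℝ}
    (hR : 0 ≤ R) (h : √(ffrac ((x * star y).re / y.norm) ^ 2 +
      ffrac ((x * star y).im / y.norm) ^ 2) ≤ R) :
    ((x % y).norm : ℝ) ≤ R ^ 2 * y.norm := by
  rw [Real.sqrt_le_left hR] at h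
  rw [norm_mod_eq x hy, mul_comm (R ^ 2)]
  gcongr
  exact_mod_cast norm_nonneg y

theorem sq_re_le_norm (z : GaussianInt) : z.re ^ 2 ≤ z.norm := by
  rw [Zsqrtd.norm_def]; nlinarith [sq_nonneg z.im]

theorem sq_im_le_norm (z : GaussianInt) : z.im ^ 2 ≤ z.norm := by
  rw [Zsqrtd.norm_def]; nlinarith [sq_nonneg z.re]

theorem norm_sub_le (z w : GaussianInt) : (z - w).norm ≤ 2 * z.norm + 2 * w.norm := by
  simp only [Zsqrtd.norm_def, Zsqrtd.re_sub, Zsqrtd.im_sub]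
  nlinarith [sq_nonneg (z.re + w.re), sq_nonneg (z.im + w.im)]

theorem setOf_norm_le_subset_box (X : ℝ) :
    {z : GaussianInt | (z.norm : ℝ) ≤ X} ⊆
      (fun p : ℤ × ℤ => (⟨p.1, p.2⟩ : GaussianInt)) ''
        (Finset.Icc (-⌊√X⌋) ⌊√X⌋ ×ˢ Finset.Icc (-⌊√X⌋) ⌊√X⌋ : Finset (ℤ × ℤ)) := by
  intro z hz
  have hcoord {c : ℤ} (hc : c ^ 2 ≤ z.norm) : c ∈ Finset.Icc (-⌊√X⌋) ⌊√X⌋ := by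
    have hcX : ((c ^ 2 : ℤ) : ℝ) ≤ X := (Int.cast_le.mpr hc).trans hz
    have : |c| ≤ ⌊√X⌋ := by
      rw [Int.le_floor, Int.cast_abs]
      exact Real.abs_le_sqrt (by exact_mod_cast hcX)
    exact Finset.mem_Icc.mpr (abs_le.mp this)
  exact ⟨(z.re, z.im), Finset.mem_coe.mpr (Finset.mem_product.mpr
    ⟨hcoord (sq_re_le_norm z), hcoord (sq_im_le_norm z)⟩), rfl⟩

theorem finite_setOf_norm_le (X : ℝ) : {z : GaussianInt | (z.norm : ℝ) ≤ X}.Finite :=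
  ((Finset.finite_toSet _).image _).subset (setOf_norm_le_subset_box X)

theorem ncard_setOf_norm_le_le (X : ℝ) :
    ({z : GaussianInt | (z.norm : ℝ) ≤ X}.ncard : ℝ) ≤ (2 * √X + 1) ^ 2 := by
  have hM : (0 : ℤ) ≤ ⌊√X⌋ := Int.floor_nonneg.mpr (Real.sqrt_nonneg X)
  have hside : ((Finset.Icc (-⌊√X⌋) ⌊√X⌋).card : ℝ) = 2 * ⌊√X⌋ + 1 := by
    rw [Int.card_Icc, ← Int.cast_natCast, Int.toNat_of_nonneg (by omega)]
    push_cast; ring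
  calc ({z : GaussianInt | (z.norm : ℝ) ≤ X}.ncard : ℝ)
      ≤ ((Finset.Icc (-⌊√X⌋) ⌊√X⌋ ×ˢ Finset.Icc (-⌊√X⌋) ⌊√X⌋).card : ℝ) := by
        rw [← Set.ncard_coe_finset]
        exact_mod_cast (ncard_le_ncard (setOf_norm_le_subset_box X)
          ((Finset.finite_toSet _).image _)).trans (ncard_image_le (Finset.finite_toSet _))
    _ = (2 * ⌊√X⌋ + 1) ^ 2 := by rw [Finset.card_product]; push_cast [hside]; ring
    _ ≤ (2 * √X + 1) ^ 2 := by
        have : (0 : ℝ) ≤ ⌊√X⌋ := by exact_mod_cast hM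
        gcongr; exact Int.floor_le _

theorem ncard_le_ncard_setOf_norm_le_of_dvd_sub {d : GaussianInt} (hd : d ≠ 0) {X : ℝ}
    {s : Set GaussianInt} (hX : ∀ q ∈ s, (q.norm : ℝ) ≤ X)
    (hs : ∀ q ∈ s, ∀ q' ∈ s, d ∣ q - q') :
    s.ncard ≤ {z : GaussianInt | (z.norm : ℝ) ≤ 4 * X / d.norm}.ncard := by
  rcases s.eq_empty_or_nonempty with rfl | ⟨q₀, hq₀⟩
  · simp
  have hquot {q} (hq : q ∈ s) : d * ((q - q₀) / d) = q - q₀ :=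
    EuclideanDomain.mul_div_cancel' hd (hs q hq q₀ hq₀)
  refine ncard_le_ncard_of_injOn (fun q => (q - q₀) / d) (fun q hq => ?_)
    (fun q hq q' hq' h => ?_) (finite_setOf_norm_le _)
  · have hnorm : (d.norm : ℝ) * ((q - q₀) / d).norm = (q - q₀).norm := by
      rw [← Int.cast_mul, ← Zsqrtd.norm_mul, hquot hq]
    have hsub : ((q - q₀).norm : ℝ) ≤ 2 * q.norm + 2 * q₀.norm := by
      exact_mod_cast GaussianInt.norm_sub_le q q₀
    rw [mem_ofPred_eq, le_div_iff₀ (by exact_mod_cast norm_pos.mpr hd), mul_comm, hnorm]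
    linarith [hX q hq, hX q₀ hq₀]
  · simpa [hquot hq, hquot hq'] using congrArg (d * ·) h

end GaussianInt

/-- Proposition 2: counting moduli whose associated point lies in a small disk. -/
theorem ball_count :
    ∃ C : ℝ, 0 < C ∧ ∀ Q L R : ℝ, 1 ≤ Q → 1 ≤ L → 0 < R →
      ∀ S : Set GaussianInt, (0 : GaussianInt) ∉ S →
      ∀ u₂ v₂ x₂ y₂ : ℤ, (⟨u₂, v₂⟩ : GaussianInt) ∈ S →
      Q / 2 < (Zsqrtd.norm (⟨u₂, v₂⟩ : GaussianInt) : ℝ) →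
      (Zsqrtd.norm (⟨u₂, v₂⟩ : GaussianInt) : ℝ) ≤ Q →
      GCoprime ⟨x₂, y₂⟩ ⟨u₂, v₂⟩ →
      (Set.ncard {q : GaussianInt | q ∈ S ∧ (Zsqrtd.norm q : ℝ) ≤ L * Q ∧
          Real.sqrt
            (ffrac (((q.re * (x₂ * u₂ + y₂ * v₂) + q.im * (x₂ * v₂ - y₂ * u₂) : ℤ) : ℝ) /
                (Zsqrtd.norm (⟨u₂, v₂⟩ : GaussianInt) : ℝ)) ^ 2 +
             ffrac ((((-q.im) * (x₂ * u₂ + y₂ * v₂) + q.re * (x₂ * v₂ - y₂ * u₂) : ℤ) : ℝ) /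
                (Zsqrtd.norm (⟨u₂, v₂⟩ : GaussianInt) : ℝ)) ^ 2)
            ≤ R} : ℝ)
        ≤ C * (1 + R ^ 2 * Q) * L := by
  refine ⟨528, by norm_num, ?_⟩
  intro Q L R hQ hL hR S _ u₂ v₂ x₂ y₂ _ hq₂_lo hq₂_hi hcop
  set q₂ : GaussianInt := ⟨u₂, v₂⟩
  set r₂ : GaussianInt := ⟨x₂, y₂⟩
  have hq₂ : q₂ ≠ 0 := by
    rintro h
    rw [h, Zsqrtd.norm_zero, Int.cast_zero] at hq₂_lo
    linarith
  have hre (q : GaussianInt) :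
      q.re * (x₂ * u₂ + y₂ * v₂) + q.im * (x₂ * v₂ - y₂ * u₂) = (q * r₂ * star q₂).re := by
    simp [q₂, r₂]; ring
  have him (q : GaussianInt) :
      -q.im * (x₂ * u₂ + y₂ * v₂) + q.re * (x₂ * v₂ - y₂ * u₂) = -(q * r₂ * star q₂).im := by
    simp [q₂, r₂]; ring
  simp only [hre, him, Int.cast_neg, neg_div, sq_ffrac_neg]
  set T := {q : GaussianInt | q ∈ S ∧ (q.norm : ℝ) ≤ L * Q ∧
    √(ffrac ((q * r₂ * star q₂).re / q₂.norm) ^ 2 +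
      ffrac ((q * r₂ * star q₂).im / q₂.norm) ^ 2) ≤ R}
  have hmaps : MapsTo (· * r₂ % q₂) T {w | (w.norm : ℝ) ≤ R ^ 2 * Q} := fun q hq =>
    (GaussianInt.norm_mod_le_of_sqrt_le _ hq₂ hR.le hq.2.2).trans (by gcongr)
  have hfiber (w : GaussianInt) : (T ∩ (· * r₂ % q₂) ⁻¹' {w}).ncard ≤
      {z : GaussianInt | (z.norm : ℝ) ≤ 8 * L}.ncard := by
    refine (GaussianInt.ncard_le_ncard_setOf_norm_le_of_dvd_sub hq₂ (X := L * Q)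
      (fun q hq => hq.1.2.1) fun q hq q' hq' =>
        EuclideanDomain.dvd_sub_of_mul_mod_eq hcop.isCoprime (hq.2.trans hq'.2.symm)).trans
      (ncard_le_ncard (fun z hz => ?_) (GaussianInt.finite_setOf_norm_le _))
    refine le_trans (b := 4 * (L * Q) / q₂.norm) hz ((div_le_iff₀ (by linarith)).mpr ?_)
    nlinarith
  calc (T.ncard : ℝ)
      ≤ {z : GaussianInt | (z.norm : ℝ) ≤ 8 * L}.ncard *
          {w : GaussianInt | (w.norm : ℝ) ≤ R ^ 2 * Q}.ncard := by
        exact_mod_cast ncard_le_mul_ncard_of_mapsTo hmaps (GaussianInt.finite_setOf_norm_le _) _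
          fun w _ => hfiber w
    _ ≤ (2 * √(8 * L) + 1) ^ 2 * (2 * √(R ^ 2 * Q) + 1) ^ 2 := by
        gcongr <;> exact GaussianInt.ncard_setOf_norm_le_le _
    _ ≤ (66 * L) * (8 * (1 + R ^ 2 * Q)) := by
        gcongr
        · exact (sq_two_mul_sqrt_add_one_le (by positivity)).trans (by linarith)
        · exact (sq_two_mul_sqrt_add_one_le (by positivity)).trans (by linarith)
    _ = 528 * (1 + R ^ 2 * Q) * L := by ring
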